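/- Let A be a unital prime complex *-algebra containing a nontrivial projection, let B be a complex *-algebra, and let Φ : A → B be a bijective mapping satisfying Φ(xy − yx*) = Φ(x)Φ(y) − Φ(y)Φ(x)* for all x, y ∈ A. Then Φ is additive, i.e. Φ(a + b) = Φ(a) + Φ(b) for all a, b ∈ A. -/

import Mathlib

/-!
Write `x ⋄ y = x y - y x*`, so that `Φ (x ⋄ y) = Φ x ⋄ Φ y`, and let `q = 1 - p`. Given `a`, `b`,
surjectivity provides `c` with `Φ c = Φ a + Φ b`; since `⋄` is biadditive,
`Φ (x ⋄ c) = Φ (x ⋄ a) + Φ (x ⋄ b)` and `Φ (c ⋄ x) = Φ (a ⋄ x) + Φ (b ⋄ x)`. Whenever the right-hand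
side is already known to be `Φ` of a sum (for instance because one term vanishes), injectivity
yields `x ⋄ c = x ⋄ (a + b)`. Testing with `x = I p, I q, I (p - q), p, q` pins down the Peirce
corners of `c` when `a` and `b` lie in different Peirce corners of `p`. When both lie in `p A q`,
so does `d = c - a - b`, and testing against `b t` and `b t + t b*` for self-adjoint `t ∈ q A q`
gives `b (q A q) d* = 0`, so `d = 0` by primeness; the corner `p A p` reduces to this one.
Writing each element as the sum of its corners gives additivity.
-/

open Complex ComplexStarModule

theorem eq_zero_of_add_self_eq_zero {M : Type*} [AddCommGroup M] [Module ℂ M] {x : M}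
    (h : x + x = 0) : x = 0 :=
  (smul_eq_zero.mp (by rwa [two_smul] : (2 : ℂ) • x = 0)).resolve_left two_ne_zero

section SkewLie

variable {A : Type*} [Ring A] [StarRing A]

def skewLie (x y : A) : A := x * y - y * star x

infixl:70 " ⋄ " => skewLie

theorem skewLie_add_left (x x' y : A) : (x + x') ⋄ y = x ⋄ y + x' ⋄ y := by
  simp only [skewLie, star_add]; noncomm_ring

theorem skewLie_add_right (x y y' : A) : x ⋄ (y + y') = x ⋄ y + x ⋄ y' := by
  simp only [skewLie]; noncomm_ring

theorem skewLie_sub_left (x x' y : A) : (x - x') ⋄ y = x ⋄ y - x' ⋄ y := by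
  simp only [skewLie, star_sub]; noncomm_ring

theorem skewLie_sub_right (x y y' : A) : x ⋄ (y - y') = x ⋄ y - x ⋄ y' := by
  simp only [skewLie]; noncomm_ring

theorem skewLie_neg_left (x y : A) : (-x) ⋄ y = -(x ⋄ y) := by
  simp only [skewLie, star_neg]; noncomm_ring

variable [Algebra ℂ A] [StarModule ℂ A]

theorem I_smul_skewLie {e : A} (he : IsSelfAdjoint e) (y : A) :
    (I • e) ⋄ y = I • (e * y + y * e) := by
  rw [skewLie, star_smul, he.star_eq, Complex.star_def, conj_I, smul_mul_assoc, mul_smul_comm,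
    neg_smul, sub_neg_eq_add, smul_add]

theorem I_smul_skewLie_eq_zero {e y : A} (he : IsSelfAdjoint e) (h : e * y = 0) (h' : y * e = 0) :
    (I • e) ⋄ y = 0 := by
  rw [I_smul_skewLie he, h, h', add_zero, smul_zero]

theorem eq_of_I_smul_one_skewLie_eq {c d : A} (h : (I • 1 : A) ⋄ c = (I • 1 : A) ⋄ d) :
    c = d := by
  rw [I_smul_skewLie (.one A), I_smul_skewLie (.one A)] at h
  simpa [← two_smul ℂ, smul_smul] using h

theorem mul_eq_zero_of_skewLie_eq_zero {z c : A} (h : z ⋄ c = 0) (hI : (I • z) ⋄ c = 0) :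
    z * c = 0 ∧ c * star z = 0 := by
  rw [skewLie, star_smul, Complex.star_def, conj_I, smul_mul_assoc, mul_smul_comm, neg_smul,
    sub_neg_eq_add, ← smul_add, smul_eq_zero] at hI
  have hI := hI.resolve_left I_ne_zero
  rw [skewLie, sub_eq_zero] at h
  have hzc : z * c = 0 := eq_zero_of_add_self_eq_zero (by nth_rewrite 2 [h]; exact hI)
  exact ⟨hzc, h ▸ hzc⟩

end SkewLie

section Corner

variable {A : Type*} [Ring A] [Algebra ℂ A]

/-- For idempotents `e`, `f` this is the Peirce corner `e * A * f`. -/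
def corner (e f : A) : Submodule ℂ A where
  carrier := {x | e * x = x ∧ x * f = x}
  add_mem' hx hy := ⟨by rw [mul_add, hx.1, hy.1], by rw [add_mul, hx.2, hy.2]⟩
  zero_mem' := ⟨mul_zero e, zero_mul f⟩
  smul_mem' α _ hx := ⟨by rw [mul_smul_comm, hx.1], by rw [smul_mul_assoc, hx.2]⟩

namespace corner

variable {e f e' f' g x y : A}

theorem left_mul (hx : x ∈ corner e f) : e * x = x := hx.1

theorem mul_right (hx : x ∈ corner e f) : x * f = x := hx.2

theorem mul_mul_mem (he : IsIdempotentElem e) (hf : IsIdempotentElem f) (y : A) :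
    e * y * f ∈ corner e f :=
  ⟨by rw [← mul_assoc, ← mul_assoc, he.eq], by rw [mul_assoc, hf.eq]⟩

theorem mul_mem (hx : x ∈ corner e f) (hy : y ∈ corner e' g) : x * y ∈ corner e g :=
  ⟨by rw [← mul_assoc, hx.1], by rw [mul_assoc, hy.2]⟩

theorem mul_left_eq_zero (hge : g * e = 0) (hx : x ∈ corner e f) : g * x = 0 := by
  rw [← hx.1, ← mul_assoc, hge, zero_mul]

theorem mul_right_eq_zero (hfg : f * g = 0) (hx : x ∈ corner e f) : x * g = 0 := by
  rw [← hx.2, mul_assoc, hfg, mul_zero]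

theorem mul_eq_zero (hfe : f * e' = 0) (hx : x ∈ corner e f) (hy : y ∈ corner e' f') :
    x * y = 0 := by
  rw [← hx.2, ← hy.1, mul_assoc, ← mul_assoc f, hfe, zero_mul, mul_zero]

theorem star_mem [StarRing A] (he : IsSelfAdjoint e) (hf : IsSelfAdjoint f)
    (hx : x ∈ corner e f) : star x ∈ corner f e :=
  ⟨by rw [← hf.star_eq, ← star_mul, hx.2], by rw [← he.star_eq, ← star_mul, hx.1]⟩

theorem realPart_mem [StarRing A] [StarModule ℂ A] (he : IsSelfAdjoint e)
    (hx : x ∈ corner e e) : (ℜ x : A) ∈ corner e e := by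
  rw [realPart_apply_coe]
  exact Submodule.smul_of_tower_mem _ _ (add_mem hx (star_mem he he hx))

theorem imaginaryPart_mem [StarRing A] [StarModule ℂ A] (he : IsSelfAdjoint e)
    (hx : x ∈ corner e e) : (ℑ x : A) ∈ corner e e := by
  rw [imaginaryPart_apply_coe]
  exact Submodule.smul_mem _ _ (Submodule.smul_of_tower_mem _ _ (sub_mem hx (star_mem he he hx)))

end corner

end Corner

structure IsComplementaryProjections {A : Type*} [Ring A] [StarRing A] (p q : A) : Prop where
  left : IsStarProjection p
  right : IsStarProjection q
  add_eq_one : p + q = 1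

namespace IsComplementaryProjections

variable {A : Type*} [Ring A] [StarRing A] {p q : A}

theorem symm (H : IsComplementaryProjections p q) : IsComplementaryProjections q p :=
  ⟨H.right, H.left, by rw [add_comm, H.add_eq_one]⟩

theorem of_isStarProjection (hp : IsStarProjection p) : IsComplementaryProjections p (1 - p) :=
  ⟨hp, hp.one_sub, add_sub_cancel p 1⟩

theorem mul_eq_zero (H : IsComplementaryProjections p q) : p * q = 0 := by
  rw [eq_sub_of_add_eq' H.add_eq_one, H.left.isIdempotentElem.mul_one_sub_self]

theorem mul_mul_self (H : IsComplementaryProjections p q) (x : A) : x * p * p = x * p := by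
  rw [mul_assoc, H.left.isIdempotentElem.eq]

theorem mul_mul_eq_zero (H : IsComplementaryProjections p q) (x : A) : x * p * q = 0 := by
  rw [mul_assoc, H.mul_eq_zero, mul_zero]

theorem eq_add_corners (H : IsComplementaryProjections p q) (c : A) :
    c = p * c * p + p * c * q + q * c * p + q * c * q := by
  conv_lhs => rw [← one_mul c, ← mul_one (1 * c), ← H.add_eq_one]
  noncomm_ring

theorem isSelfAdjoint_sub (H : IsComplementaryProjections p q) : IsSelfAdjoint (p - q) :=
  H.left.isSelfAdjoint.sub H.right.isSelfAdjoint

variable [Algebra ℂ A] {x : A}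

theorem skewLie_of_mem_corner (H : IsComplementaryProjections p q) (hx : x ∈ corner p q) :
    p ⋄ x = x := by
  rw [skewLie, H.left.isSelfAdjoint.star_eq, corner.left_mul hx,
    corner.mul_right_eq_zero H.symm.mul_eq_zero hx, sub_zero]

theorem mem_corner_of_skewLie_eq_self (H : IsComplementaryProjections p q) (h : p ⋄ x = x) :
    x ∈ corner p q := by
  rw [skewLie, H.left.isSelfAdjoint.star_eq] at h
  have hpxp : p * x * p = 0 := by
    have := congr(p * $h)
    rwa [mul_sub, ← mul_assoc, H.left.isIdempotentElem.eq, sub_eq_self, ← mul_assoc] at this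
  have hxp : x * p = 0 := by
    have := congr($h * p)
    rw [sub_mul, hpxp, H.mul_mul_self, zero_sub, neg_eq_iff_add_eq_zero] at this
    exact eq_zero_of_add_self_eq_zero this
  rw [hxp, sub_zero] at h
  refine ⟨h, ?_⟩
  rw [eq_sub_of_add_eq' H.add_eq_one, mul_sub, mul_one, hxp, sub_zero]

theorem skewLie_eq_zero_of_mem_corner (H : IsComplementaryProjections p q)
    (hx : x ∈ corner p q) : x ⋄ p = 0 := by
  rw [skewLie, corner.mul_right_eq_zero H.symm.mul_eq_zero hx, corner.mul_left_eq_zero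
    H.mul_eq_zero (corner.star_mem H.left.isSelfAdjoint H.right.isSelfAdjoint hx), sub_zero]

theorem skewLie_eq_zero_of_mem_corner_of_mem_corner_self (H : IsComplementaryProjections p q)
    {z : A} (hz : z ∈ corner p q) (hx : x ∈ corner p p) : z ⋄ x = 0 := by
  rw [skewLie, corner.mul_eq_zero H.symm.mul_eq_zero hz hx, corner.mul_eq_zero H.mul_eq_zero hx
    (corner.star_mem H.left.isSelfAdjoint H.right.isSelfAdjoint hz), sub_zero]

theorem skewLie_eq_mul_of_mem_corner_self (H : IsComplementaryProjections p q) {z : A}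
    (hx : x ∈ corner p p) (hz : z ∈ corner p q) : x ⋄ z = x * z := by
  rw [skewLie, corner.mul_eq_zero H.symm.mul_eq_zero hz
    (corner.star_mem H.left.isSelfAdjoint H.left.isSelfAdjoint hx), sub_zero]

variable [StarModule ℂ A]

theorem eq_of_I_smul_skewLie_eq (H : IsComplementaryProjections p q)
    {c d : A} (hp : (I • p) ⋄ c = (I • p) ⋄ d) (hq : (I • q) ⋄ c = (I • q) ⋄ d) : c = d := by
  apply eq_of_I_smul_one_skewLie_eq
  rw [← H.add_eq_one, smul_add, skewLie_add_left, skewLie_add_left, hp, hq]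

theorem eq_zero_of_skewLie_eq_zero (H : IsComplementaryProjections p q) {d : A}
    (hs : (I • (p - q)) ⋄ d = 0) (hp : d ⋄ p = 0) (hq : d ⋄ q = 0) : d = 0 := by
  rw [I_smul_skewLie H.isSelfAdjoint_sub, smul_eq_zero, or_iff_right I_ne_zero] at hs
  rw [skewLie, sub_eq_zero] at hp hq
  have hpp := congr(p * $hs * p)
  have hqq := congr(q * $hs * q)
  simp only [mul_add, add_mul, mul_sub, sub_mul, ← mul_assoc, H.left.isIdempotentElem.eq,
    H.right.isIdempotentElem.eq, H.mul_eq_zero, H.symm.mul_eq_zero, H.mul_mul_self,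
    H.symm.mul_mul_self, H.mul_mul_eq_zero, H.symm.mul_mul_eq_zero, zero_mul, mul_zero,
    sub_zero, zero_sub, neg_mul] at hpp hqq
  have hpq : p * d * q = 0 := by rw [mul_assoc, hq, ← mul_assoc, H.mul_eq_zero, zero_mul]
  have hqp : q * d * p = 0 := by rw [mul_assoc, hp, ← mul_assoc, H.symm.mul_eq_zero, zero_mul]
  have hqq : q * d * q = 0 := neg_eq_zero.mp (eq_zero_of_add_self_eq_zero hqq)
  rw [H.eq_add_corners d, eq_zero_of_add_self_eq_zero hpp, hpq, hqp, hqq, add_zero, add_zero,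
    add_zero]

theorem I_smul_skewLie_of_mem_corner_self (H : IsComplementaryProjections p q)
    (hx : x ∈ corner p p) : (I • p) ⋄ x = I • (x + x) := by
  rw [I_smul_skewLie H.left.isSelfAdjoint, corner.left_mul hx, corner.mul_right hx]

theorem I_smul_skewLie_of_mem_corner_left (H : IsComplementaryProjections p q)
    (hx : x ∈ corner p q) : (I • p) ⋄ x = I • x := by
  rw [I_smul_skewLie H.left.isSelfAdjoint, corner.left_mul hx,
    corner.mul_right_eq_zero H.symm.mul_eq_zero hx, add_zero]

theorem I_smul_skewLie_of_mem_corner_right (H : IsComplementaryProjections p q)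
    (hx : x ∈ corner q p) : (I • p) ⋄ x = I • x := by
  rw [I_smul_skewLie H.left.isSelfAdjoint, corner.mul_right hx,
    corner.mul_left_eq_zero H.mul_eq_zero hx, zero_add]

theorem I_smul_skewLie_of_mem_corner_compl (H : IsComplementaryProjections p q)
    (hx : x ∈ corner q q) : (I • p) ⋄ x = 0 :=
  I_smul_skewLie_eq_zero H.left.isSelfAdjoint (corner.mul_left_eq_zero H.mul_eq_zero hx)
    (corner.mul_right_eq_zero H.symm.mul_eq_zero hx)

theorem I_smul_sub_skewLie_of_mem_corner_left (H : IsComplementaryProjections p q)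
    (hx : x ∈ corner p q) : (I • (p - q)) ⋄ x = 0 := by
  rw [I_smul_skewLie H.isSelfAdjoint_sub, sub_mul, mul_sub, corner.left_mul hx,
    corner.mul_right hx, corner.mul_left_eq_zero H.symm.mul_eq_zero hx,
    corner.mul_right_eq_zero H.symm.mul_eq_zero hx]
  simp

theorem I_smul_sub_skewLie_of_mem_corner_right (H : IsComplementaryProjections p q)
    (hx : x ∈ corner q p) : (I • (p - q)) ⋄ x = 0 := by
  rw [← neg_sub, smul_neg, skewLie_neg_left, H.symm.I_smul_sub_skewLie_of_mem_corner_left hx,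
    neg_zero]

end IsComplementaryProjections

section SkewLieBijection

variable {A B : Type*} [Ring A] [StarRing A] [Ring B] [StarRing B] {Φ : A → B}

def PreservesSkewLie (Φ : A → B) : Prop := ∀ x y, Φ (x ⋄ y) = Φ x ⋄ Φ y

theorem map_zero_of_preservesSkewLie (hsurj : Function.Surjective Φ)
    (hskew : PreservesSkewLie Φ) : Φ 0 = 0 := by
  obtain ⟨a, ha⟩ := hsurj 0
  simpa [ha, skewLie] using hskew a 0

theorem map_skewLie_of_map_eq_add_right (hskew : PreservesSkewLie Φ) {a b c : A}
    (hc : Φ c = Φ a + Φ b) (x : A) : Φ (x ⋄ c) = Φ (x ⋄ a) + Φ (x ⋄ b) := by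
  rw [hskew, hskew, hskew, hc, skewLie_add_right]

theorem map_skewLie_of_map_eq_add_left (hskew : PreservesSkewLie Φ) {a b c : A}
    (hc : Φ c = Φ a + Φ b) (x : A) : Φ (c ⋄ x) = Φ (a ⋄ x) + Φ (b ⋄ x) := by
  rw [hskew, hskew, hskew, hc, skewLie_add_left]

theorem skewLie_eq_of_map_eq_add_right (hinj : Function.Injective Φ)
    (hskew : PreservesSkewLie Φ) {a b c x : A} (hc : Φ c = Φ a + Φ b)
    (hx : Φ (x ⋄ a + x ⋄ b) = Φ (x ⋄ a) + Φ (x ⋄ b)) :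
    x ⋄ c = x ⋄ (a + b) :=
  hinj <| by rw [map_skewLie_of_map_eq_add_right hskew hc, skewLie_add_right, hx]

theorem skewLie_eq_of_map_eq_add_left (hinj : Function.Injective Φ)
    (hskew : PreservesSkewLie Φ) {a b c x : A} (hc : Φ c = Φ a + Φ b)
    (hx : Φ (a ⋄ x + b ⋄ x) = Φ (a ⋄ x) + Φ (b ⋄ x)) :
    c ⋄ x = (a + b) ⋄ x :=
  hinj <| by rw [map_skewLie_of_map_eq_add_left hskew hc, skewLie_add_left, hx]

end SkewLieBijection

def IsPrimeRing (A : Type*) [Ring A] : Prop :=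
  ∀ a b : A, (∀ x : A, a * x * b = 0) → a = 0 ∨ b = 0

section Additivity

variable {A B : Type*} [Ring A] [StarRing A] [Algebra ℂ A] [StarModule ℂ A]
  [Ring B] [StarRing B] {Φ : A → B} {p q : A}

theorem map_add_of_mem_corner_pp_qq (H : IsComplementaryProjections p q)
    (hΦ : Function.Bijective Φ) (hskew : PreservesSkewLie Φ) {a b : A}
    (ha : a ∈ corner p p) (hb : b ∈ corner q q) : Φ (a + b) = Φ a + Φ b := by
  have h0 := map_zero_of_preservesSkewLie hΦ.2 hskew
  obtain ⟨c, hc⟩ := hΦ.2 (Φ a + Φ b)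
  suffices c = a + b by rw [← this, hc]
  exact H.eq_of_I_smul_skewLie_eq
    (skewLie_eq_of_map_eq_add_right hΦ.1 hskew hc
      (by simp [H.I_smul_skewLie_of_mem_corner_compl hb, h0]))
    (skewLie_eq_of_map_eq_add_right hΦ.1 hskew hc
      (by simp [H.symm.I_smul_skewLie_of_mem_corner_compl ha, h0]))

theorem map_add_of_mem_corner_pq_qp (H : IsComplementaryProjections p q)
    (hΦ : Function.Bijective Φ) (hskew : PreservesSkewLie Φ) {u v : A}
    (hu : u ∈ corner p q) (hv : v ∈ corner q p) : Φ (u + v) = Φ u + Φ v := by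
  have h0 := map_zero_of_preservesSkewLie hΦ.2 hskew
  obtain ⟨c, hc⟩ := hΦ.2 (Φ u + Φ v)
  suffices c - (u + v) = 0 by rw [← sub_eq_zero.mp this, hc]
  have hs : (I • (p - q)) ⋄ c = (I • (p - q)) ⋄ (u + v) :=
    skewLie_eq_of_map_eq_add_right hΦ.1 hskew hc
      (by simp [H.I_smul_sub_skewLie_of_mem_corner_left hu,
        H.I_smul_sub_skewLie_of_mem_corner_right hv, h0])
  have hp : c ⋄ p = (u + v) ⋄ p := skewLie_eq_of_map_eq_add_left hΦ.1 hskew hc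
    (by simp [H.skewLie_eq_zero_of_mem_corner hu, h0])
  have hq : c ⋄ q = (u + v) ⋄ q := skewLie_eq_of_map_eq_add_left hΦ.1 hskew hc
    (by simp [H.symm.skewLie_eq_zero_of_mem_corner hv, h0])
  exact H.eq_zero_of_skewLie_eq_zero (by rw [skewLie_sub_right, hs, sub_self])
    (by rw [skewLie_sub_left, hp, sub_self]) (by rw [skewLie_sub_left, hq, sub_self])

section CornerPQ

variable {a b c t : A}

theorem mul_mul_star_eq_zero_of_isSelfAdjoint (H : IsComplementaryProjections p q)
    (hΦ : Function.Bijective Φ) (hskew : PreservesSkewLie Φ) (hc : Φ c = Φ a + Φ b)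
    (ha : a ∈ corner p q) (hb : b ∈ corner p q) (hD : c - (a + b) ∈ corner p q)
    (ht : t ∈ corner q q) (hts : IsSelfAdjoint t) : (c - (a + b)) * t * star b = 0 := by
  have hsb : star b ∈ corner q p := corner.star_mem H.left.isSelfAdjoint H.right.isSelfAdjoint hb
  have hbt : b * t ∈ corner p q := corner.mul_mem hb ht
  have htsb : t * star b ∈ corner q p := corner.mul_mem ht hsb
  have hstar : star (b * t) = t * star b := by rw [star_mul, hts.star_eq]
  -- `b t` cannot tell `b` from `-b*`, and `Φ (a - b*)` splits by the antidiagonal case.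
  have hswap : (b * t) ⋄ b = (b * t) ⋄ (-star b) := by
    rw [skewLie, skewLie, hstar, corner.mul_eq_zero H.symm.mul_eq_zero hbt hb, mul_neg, neg_mul,
      mul_assoc, corner.mul_eq_zero H.mul_eq_zero hsb htsb, neg_zero, sub_zero, zero_sub]
  have hx : (b * t) ⋄ c = (b * t) ⋄ (a + b) :=
    skewLie_eq_of_map_eq_add_right hΦ.1 hskew hc (by
      rw [hswap, ← skewLie_add_right, map_skewLie_of_map_eq_add_right hskew
        (map_add_of_mem_corner_pq_qp H hΦ hskew ha (neg_mem hsb))])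
  rw [← sub_eq_zero, ← skewLie_sub_right, skewLie, hstar, mul_assoc,
    corner.mul_eq_zero H.symm.mul_eq_zero ht hD, mul_zero, zero_sub, neg_eq_zero] at hx
  rw [mul_assoc, hx]

theorem mul_mul_star_sub_eq_zero_of_isSelfAdjoint (H : IsComplementaryProjections p q)
    (hΦ : Function.Bijective Φ) (hskew : PreservesSkewLie Φ) (hc : Φ c = Φ a + Φ b)
    (ha : a ∈ corner p q) (hb : b ∈ corner p q) (hD : c - (a + b) ∈ corner p q)
    (ht : t ∈ corner q q) (hts : IsSelfAdjoint t) : b * t * star (c - (a + b)) = 0 := by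
  have h0 := map_zero_of_preservesSkewLie hΦ.2 hskew
  have hsb : star b ∈ corner q p := corner.star_mem H.left.isSelfAdjoint H.right.isSelfAdjoint hb
  have hsD : star (c - (a + b)) ∈ corner q p :=
    corner.star_mem H.left.isSelfAdjoint H.right.isSelfAdjoint hD
  have htsb : t * star b ∈ corner q p := corner.mul_mem ht hsb
  have hbx : b ⋄ (b * t + t * star b) = 0 := by
    rw [skewLie, mul_add, add_mul, ← mul_assoc, corner.mul_eq_zero H.symm.mul_eq_zero hb hb,
      corner.mul_eq_zero H.mul_eq_zero htsb hsb, zero_mul, zero_add, add_zero, mul_assoc, sub_self]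
  have hx : c ⋄ (b * t + t * star b) = (a + b) ⋄ (b * t + t * star b) :=
    skewLie_eq_of_map_eq_add_left hΦ.1 hskew hc (by simp [hbx, h0])
  rw [← sub_eq_zero, ← skewLie_sub_left, skewLie, mul_add, add_mul,
    corner.mul_eq_zero H.symm.mul_eq_zero hD (corner.mul_mem hb ht), ← mul_assoc,
    mul_mul_star_eq_zero_of_isSelfAdjoint H hΦ hskew hc ha hb hD ht hts,
    corner.mul_eq_zero H.mul_eq_zero htsb hsD] at hx
  simpa using hx

end CornerPQ

theorem map_add_of_mem_corner_pq (H : IsComplementaryProjections p q) (hA : IsPrimeRing A)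
    (hΦ : Function.Bijective Φ) (hskew : PreservesSkewLie Φ) {a b : A}
    (ha : a ∈ corner p q) (hb : b ∈ corner p q) : Φ (a + b) = Φ a + Φ b := by
  have h0 := map_zero_of_preservesSkewLie hΦ.2 hskew
  obtain ⟨c, hc⟩ := hΦ.2 (Φ a + Φ b)
  have hcm : c ∈ corner p q := H.mem_corner_of_skewLie_eq_self <| hΦ.1 <| by
    rw [map_skewLie_of_map_eq_add_right hskew hc, H.skewLie_of_mem_corner ha,
      H.skewLie_of_mem_corner hb, hc]
  set d := c - (a + b)
  have hD : d ∈ corner p q := sub_mem hcm (add_mem ha hb)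
  have hsD : star d ∈ corner q p := corner.star_mem H.left.isSelfAdjoint H.right.isSelfAdjoint hD
  have hbtd : ∀ t ∈ corner q q, b * t * star d = 0 := by
    intro t ht
    have hq := H.right.isSelfAdjoint
    rw [← realPart_add_I_smul_imaginaryPart t, mul_add, add_mul, mul_smul_comm, smul_mul_assoc,
      mul_mul_star_sub_eq_zero_of_isSelfAdjoint H hΦ hskew hc ha hb hD
        (corner.realPart_mem hq ht) (ℜ t).2,
      mul_mul_star_sub_eq_zero_of_isSelfAdjoint H hΦ hskew hc ha hb hD
        (corner.imaginaryPart_mem hq ht) (ℑ t).2, smul_zero, add_zero]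
  have hbyd : ∀ y, b * y * star d = 0 := fun y => by
    rw [← hbtd _ (corner.mul_mul_mem H.right.isIdempotentElem H.right.isIdempotentElem y)]
    simp only [← mul_assoc, corner.mul_right hb]
    rw [mul_assoc _ q, corner.left_mul hsD]
  rcases hA b (star d) hbyd with rfl | hd0
  · simp [h0]
  · rw [← sub_eq_zero.mp (star_eq_zero.mp hd0), hc]

theorem mem_corner_of_map_eq_add_of_mem_corner_self (H : IsComplementaryProjections p q)
    (hA : IsPrimeRing A) (hp0 : p ≠ 0) (hΦ : Function.Bijective Φ) (hskew : PreservesSkewLie Φ)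
    {a b c : A} (hc : Φ c = Φ a + Φ b) (ha : a ∈ corner p p) (hb : b ∈ corner p p) :
    c ∈ corner p p := by
  have h0 := map_zero_of_preservesSkewLie hΦ.2 hskew
  have hpI := H.left.isIdempotentElem
  have hqI := H.right.isIdempotentElem
  have hzc : ∀ z ∈ corner p q, z ⋄ c = 0 := fun z hz => by
    rw [skewLie_eq_of_map_eq_add_right hΦ.1 hskew hc (by
      simp [H.skewLie_eq_zero_of_mem_corner_of_mem_corner_self hz ha,
        H.skewLie_eq_zero_of_mem_corner_of_mem_corner_self hz hb, h0]),
      H.skewLie_eq_zero_of_mem_corner_of_mem_corner_self hz (add_mem ha hb)]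
  have hz : ∀ z ∈ corner p q, z * c = 0 ∧ c * star z = 0 := fun z hz =>
    mul_eq_zero_of_skewLie_eq_zero (hzc z hz) (hzc _ (Submodule.smul_mem _ I hz))
  have hqc : q * c = 0 := (hA p (q * c) fun y => by
    rw [← mul_assoc]; exact (hz _ (corner.mul_mul_mem hpI hqI y)).1).resolve_left hp0
  have hcq : c * q = 0 := (hA (c * q) p fun y => by
    simpa [star_mul, H.left.isSelfAdjoint.star_eq, H.right.isSelfAdjoint.star_eq, mul_assoc]
      using (hz _ (corner.mul_mul_mem hpI hqI (star y))).2).resolve_right hp0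
  exact ⟨by rw [eq_sub_of_add_eq H.add_eq_one, sub_mul, one_mul, hqc, sub_zero],
    by rw [eq_sub_of_add_eq H.add_eq_one, mul_sub, mul_one, hcq, sub_zero]⟩

theorem map_add_of_mem_corner_pp (H : IsComplementaryProjections p q) (hA : IsPrimeRing A)
    (hp0 : p ≠ 0) (hq0 : q ≠ 0) (hΦ : Function.Bijective Φ) (hskew : PreservesSkewLie Φ)
    {a b : A} (ha : a ∈ corner p p) (hb : b ∈ corner p p) : Φ (a + b) = Φ a + Φ b := by
  obtain ⟨c, hc⟩ := hΦ.2 (Φ a + Φ b)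
  have hcm := mem_corner_of_map_eq_add_of_mem_corner_self H hA hp0 hΦ hskew hc ha hb
  have hab : a + b ∈ corner p p := add_mem ha hb
  set d := c - (a + b)
  have hdz : ∀ z ∈ corner p q, d * z = 0 := fun z hz => by
    have := skewLie_eq_of_map_eq_add_left hΦ.1 hskew hc (x := z) (by
      rw [H.skewLie_eq_mul_of_mem_corner_self ha hz, H.skewLie_eq_mul_of_mem_corner_self hb hz]
      exact map_add_of_mem_corner_pq H hA hΦ hskew (corner.mul_mem ha hz) (corner.mul_mem hb hz))
    rw [H.skewLie_eq_mul_of_mem_corner_self hcm hz, H.skewLie_eq_mul_of_mem_corner_self hab hz]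
      at this
    rw [sub_mul, this, sub_self]
  have hdyq : ∀ y, d * y * q = 0 := fun y => by
    have hdp : d * p = d := corner.mul_right (sub_mem hcm hab)
    rw [← hdp, mul_assoc d p, mul_assoc d,
      hdz _ (corner.mul_mul_mem H.left.isIdempotentElem H.right.isIdempotentElem y)]
  rcases hA d q hdyq with hd0 | hq
  · rw [← sub_eq_zero.mp hd0, hc]
  · exact absurd hq hq0

theorem map_add_offDiag_of_mem_corner_pp (H : IsComplementaryProjections p q)
    (hΦ : Function.Bijective Φ) (hskew : PreservesSkewLie Φ) {m₁ m₂ n : A}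
    (hm₁ : m₁ ∈ corner p q) (hm₂ : m₂ ∈ corner q p) (hn : n ∈ corner p p) :
    Φ (m₁ + m₂ + n) = Φ (m₁ + m₂) + Φ n := by
  have h0 := map_zero_of_preservesSkewLie hΦ.2 hskew
  obtain ⟨c, hc⟩ := hΦ.2 (Φ (m₁ + m₂) + Φ n)
  suffices c = m₁ + m₂ + n by rw [← this, hc]
  have hq : (I • q) ⋄ c = (I • q) ⋄ (m₁ + m₂ + n) :=
    skewLie_eq_of_map_eq_add_right hΦ.1 hskew hc
      (by simp [H.symm.I_smul_skewLie_of_mem_corner_compl hn, h0])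
  have hs : (I • (p - q)) ⋄ c = (I • (p - q)) ⋄ (m₁ + m₂ + n) :=
    skewLie_eq_of_map_eq_add_right hΦ.1 hskew hc (by
      simp [skewLie_add_right, H.I_smul_sub_skewLie_of_mem_corner_left hm₁,
        H.I_smul_sub_skewLie_of_mem_corner_right hm₂, h0])
  refine H.eq_of_I_smul_skewLie_eq ?_ hq
  rw [← sub_add_cancel p q, smul_add, skewLie_add_left, skewLie_add_left, hs, hq]

theorem map_add_offDiag_diag (H : IsComplementaryProjections p q)
    (hΦ : Function.Bijective Φ) (hskew : PreservesSkewLie Φ) {m₁ m₂ n₁ n₂ : A}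
    (hm₁ : m₁ ∈ corner p q) (hm₂ : m₂ ∈ corner q p) (hn₁ : n₁ ∈ corner p p)
    (hn₂ : n₂ ∈ corner q q) : Φ (m₁ + m₂ + (n₁ + n₂)) = Φ (m₁ + m₂) + Φ (n₁ + n₂) := by
  obtain ⟨c, hc⟩ := hΦ.2 (Φ (m₁ + m₂) + Φ (n₁ + n₂))
  suffices c = m₁ + m₂ + (n₁ + n₂) by rw [← this, hc]
  have hpm : (I • p) ⋄ (m₁ + m₂) = I • m₁ + I • m₂ := by
    rw [skewLie_add_right, H.I_smul_skewLie_of_mem_corner_left hm₁,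
      H.I_smul_skewLie_of_mem_corner_right hm₂]
  have hpn : (I • p) ⋄ (n₁ + n₂) = I • (n₁ + n₁) := by
    rw [skewLie_add_right, H.I_smul_skewLie_of_mem_corner_self hn₁,
      H.I_smul_skewLie_of_mem_corner_compl hn₂, add_zero]
  have hqm : (I • q) ⋄ (m₁ + m₂) = I • m₂ + I • m₁ := by
    rw [skewLie_add_right, H.symm.I_smul_skewLie_of_mem_corner_right hm₁,
      H.symm.I_smul_skewLie_of_mem_corner_left hm₂, add_comm]
  have hqn : (I • q) ⋄ (n₁ + n₂) = I • (n₂ + n₂) := by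
    rw [skewLie_add_right, H.symm.I_smul_skewLie_of_mem_corner_compl hn₁,
      H.symm.I_smul_skewLie_of_mem_corner_self hn₂, zero_add]
  refine H.eq_of_I_smul_skewLie_eq (skewLie_eq_of_map_eq_add_right hΦ.1 hskew hc ?_)
    (skewLie_eq_of_map_eq_add_right hΦ.1 hskew hc ?_)
  · rw [hpm, hpn]
    exact map_add_offDiag_of_mem_corner_pp H hΦ hskew (Submodule.smul_mem _ I hm₁)
      (Submodule.smul_mem _ I hm₂) (Submodule.smul_mem _ I (add_mem hn₁ hn₁))
  · rw [hqm, hqn]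
    exact map_add_offDiag_of_mem_corner_pp H.symm hΦ hskew (Submodule.smul_mem _ I hm₂)
      (Submodule.smul_mem _ I hm₁) (Submodule.smul_mem _ I (add_mem hn₂ hn₂))

theorem map_eq_sum_corners (H : IsComplementaryProjections p q) (hΦ : Function.Bijective Φ)
    (hskew : PreservesSkewLie Φ) (x : A) :
    Φ x = Φ (p * x * p) + Φ (p * x * q) + Φ (q * x * p) + Φ (q * x * q) := by
  have hpI := H.left.isIdempotentElem
  have hqI := H.right.isIdempotentElem
  have hx : x = p * x * q + q * x * p + (p * x * p + q * x * q) := by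
    conv_lhs => rw [H.eq_add_corners x]
    abel
  rw [hx, map_add_offDiag_diag H hΦ hskew (corner.mul_mul_mem hpI hqI x)
      (corner.mul_mul_mem hqI hpI x) (corner.mul_mul_mem hpI hpI x) (corner.mul_mul_mem hqI hqI x),
    map_add_of_mem_corner_pq_qp H hΦ hskew (corner.mul_mul_mem hpI hqI x)
      (corner.mul_mul_mem hqI hpI x),
    map_add_of_mem_corner_pp_qq H hΦ hskew (corner.mul_mul_mem hpI hpI x)
      (corner.mul_mul_mem hqI hqI x), ← hx]
  abel

theorem map_add_of_preservesSkewLie (H : IsComplementaryProjections p q) (hA : IsPrimeRing A)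
    (hp0 : p ≠ 0) (hq0 : q ≠ 0) (hΦ : Function.Bijective Φ) (hskew : PreservesSkewLie Φ)
    (a b : A) : Φ (a + b) = Φ a + Φ b := by
  have hpI := H.left.isIdempotentElem
  have hqI := H.right.isIdempotentElem
  simp only [map_eq_sum_corners H hΦ hskew (a + b), map_eq_sum_corners H hΦ hskew a,
    map_eq_sum_corners H hΦ hskew b, mul_add, add_mul]
  rw [map_add_of_mem_corner_pp H hA hp0 hq0 hΦ hskew (corner.mul_mul_mem hpI hpI a)
      (corner.mul_mul_mem hpI hpI b),
    map_add_of_mem_corner_pq H hA hΦ hskew (corner.mul_mul_mem hpI hqI a)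
      (corner.mul_mul_mem hpI hqI b),
    map_add_of_mem_corner_pq H.symm hA hΦ hskew (corner.mul_mul_mem hqI hpI a)
      (corner.mul_mul_mem hqI hpI b),
    map_add_of_mem_corner_pp H.symm hA hq0 hp0 hΦ hskew (corner.mul_mul_mem hqI hqI a)
      (corner.mul_mul_mem hqI hqI b)]
  abel

end Additivity

theorem stmt_7_general {A B : Type*}
    [Ring A] [Algebra ℂ A] [StarRing A] [StarModule ℂ A]
    [Ring B] [StarRing B]
    (hAprime : ∀ a b : A, (∀ x : A, a * x * b = 0) → a = 0 ∨ b = 0)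
    (hAproj : ∃ p : A, p ≠ 0 ∧ p ≠ 1 ∧ star p = p ∧ p * p = p)
    (Φ : A → B) (hΦ : Function.Bijective Φ)
    (h : ∀ x y : A, Φ (x * y - y * star x) = Φ x * Φ y - Φ y * star (Φ x)) :
    ∀ a b : A, Φ (a + b) = Φ a + Φ b := by
  obtain ⟨p, hp0, hp1, hps, hpp⟩ := hAproj
  exact map_add_of_preservesSkewLie (.of_isStarProjection ⟨hpp, hps⟩) hAprime hp0
    (sub_ne_zero.mpr hp1.symm) hΦ h

/-- Lemma 2.3, minus case: additivity. -/
theorem stmt_7 {A B : Type*}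
    [Ring A] [Algebra ℂ A] [StarRing A] [StarModule ℂ A]
    [Ring B] [Algebra ℂ B] [StarRing B] [StarModule ℂ B]
    (hAprime : ∀ a b : A, (∀ x : A, a * x * b = 0) → a = 0 ∨ b = 0)
    (hAproj : ∃ p : A, p ≠ 0 ∧ p ≠ 1 ∧ star p = p ∧ p * p = p)
    (Φ : A → B) (hΦ : Function.Bijective Φ)
    (h : ∀ x y : A, Φ (x * y - y * star x) = Φ x * Φ y - Φ y * star (Φ x)) :
    ∀ a b : A, Φ (a + b) = Φ a + Φ b :=
  stmt_7_general hAprime hAproj Φ hΦ h
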